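/- Let w be an A₂ᵈ weight on ℝ whose characteristic [w]_{A₂ᵈ} is sufficiently close to 1. Then there exist ε > 0 and C > 0, independent of w, such that for all dyadic intervals J: (1/|J|) ∑_{I ∈ 𝒟(J)} w_I² c_I² (w⁻¹)_I ≤ C (log [w]_{A₂ᵈ})^ε [w]_{A₂ᵈ} w_J, where c_I = √|I| (w_{I₋} − w_{I₊})/(2w_I). -/

import Mathlib

open MeasureTheory Set Filter
noncomputable section

/-- The dyadic interval of generation `n` and position `k`: `[k·2⁻ⁿ, (k+1)·2⁻ⁿ)`. -/
def dI (n k : ℤ) : Set ℝ := Set.Ico ((k : ℝ) * 2 ^ (-n)) (((k : ℝ) + 1) * 2 ^ (-n))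

/-- The length `2⁻ⁿ` of a dyadic interval of generation `n`. -/
def len (n : ℤ) : ℝ := 2 ^ (-n)

/-- The average of `w` over the dyadic interval of generation `n`, position `k`. -/
def avg (w : ℝ → ℝ) (n k : ℤ) : ℝ := (2 : ℝ) ^ (n : ℤ) * ∫ x in dI n k, w x

/-- Average over the left half. -/
def avgL (w : ℝ → ℝ) (n k : ℤ) : ℝ := avg w (n + 1) (2 * k)

/-- Average over the right half. -/
def avgR (w : ℝ → ℝ) (n k : ℤ) : ℝ := avg w (n + 1) (2 * k + 1)

/-- The coefficient `c_I = √|I| (w_{I₋} − w_{I₊})/(2 w_I)`. -/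
def cI (w : ℝ → ℝ) (n k : ℤ) : ℝ :=
  Real.sqrt (len n) * (avgL w n k - avgR w n k) / (2 * avg w n k)

/-- The pointwise inverse `w⁻¹` of a weight. -/
def inv' (w : ℝ → ℝ) : ℝ → ℝ := fun x => (w x)⁻¹

/-- The dyadic A₂ characteristic `[w]_{A₂ᵈ} = sup_Q (⨍_Q w)(⨍_Q w⁻¹)`. -/
def A2d (w : ℝ → ℝ) : ℝ := ⨆ p : ℤ × ℤ, avg w p.1 p.2 * avg (inv' w) p.1 p.2

/-- The Haar function of the dyadic interval of generation `n`, position `k`. -/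
def haar (n k : ℤ) : ℝ → ℝ := fun x =>
  (Real.sqrt (len n))⁻¹ *
    ((dI (n + 1) (2 * k + 1)).indicator (fun _ => (1 : ℝ)) x -
      (dI (n + 1) (2 * k)).indicator (fun _ => (1 : ℝ)) x)

/-- The measure `w dx`. -/
def wMeas (w : ℝ → ℝ) : Measure ℝ := volume.withDensity fun x => ENNReal.ofReal (w x)

/-!
Bellman function argument. For `Q = [w]_{A₂ᵈ}` put `B(x, y) = x(Q - xy) + 2Q²(x - 1/y)`. It is
nonnegative on `{1 ≤ xy ≤ Q}`, bounded there by `(1 + 2Q²)(Q - 1)x`, and if `(u, v)` is the midpoint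
of `(u₁, v₁)` and `(u₂, v₂)` then `((u₁ - u₂)/2)² v + B(u₁, v₁) + B(u₂, v₂) ≤ 2B(u, v)`.
The pairs `(w_I, (w⁻¹)_I)` are dyadic martingales with `1 ≤ w_I (w⁻¹)_I ≤ Q`, and
`w_I² c_I² = |I| ((w_{I₋} - w_{I₊})/2)²`, so iterating the inequality down the dyadic tree of `J`
gives `|J|⁻¹ ∑_{I ⊆ J} w_I² c_I² (w⁻¹)_I ≤ 2B(w_J, (w⁻¹)_J) ≤ 2(1 + 2Q²)(Q - 1) w_J`.
Since `Q - 1 ≤ Q log Q`, this is the claim with `ε = 1` and `C = 18` once `Q ≤ 2`.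
-/

lemma two_le_add_inv_self {y : ℝ} (hy : 0 < y) : 2 ≤ y + y⁻¹ := by
  have h : y + y⁻¹ - 2 = (y - 1) ^ 2 / y := by field_simp; ring
  linarith [h ▸ div_nonneg (sq_nonneg (y - 1)) hy.le]

lemma Finset.sum_le_sum_add_sum_of_subset_union {ι M : Type*} [DecidableEq ι] [AddCommMonoid M]
    [PartialOrder M] [IsOrderedAddMonoid M] {s t r : Finset ι} {f : ι → M} (hf : ∀ i, 0 ≤ f i)
    (h : s ⊆ t ∪ r) : ∑ i ∈ s, f i ≤ ∑ i ∈ t, f i + ∑ i ∈ r, f i :=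
  calc ∑ i ∈ s, f i ≤ ∑ i ∈ t ∪ r, f i := Finset.sum_le_sum_of_subset_of_nonneg h fun i _ _ => hf i
    _ ≤ ∑ i ∈ t ∪ r, f i + ∑ i ∈ t ∩ r, f i :=
      le_add_of_nonneg_right (Finset.sum_nonneg fun i _ => hf i)
    _ = ∑ i ∈ t, f i + ∑ i ∈ r, f i := Finset.sum_union_inter

section setIntegral

variable {α : Type*} [MeasurableSpace α] {μ : Measure α} {s : Set α} {f : α → ℝ}

lemma setIntegral_pos_of_forall_pos (hs : MeasurableSet s) (hμ : μ s ≠ 0) (hf : ∀ x ∈ s, 0 < f x)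
    (hfi : IntegrableOn f s μ) : 0 < ∫ x in s, f x ∂μ := by
  rw [setIntegral_pos_iff_support_of_nonneg_ae
    ((ae_restrict_iff' hs).2 (ae_of_all _ fun x hx => (hf x hx).le)) hfi,
    inter_eq_right.2 (show s ⊆ Function.support f from fun x hx => (hf x hx).ne')]
  exact pos_iff_ne_zero.2 hμ

theorem sq_measureReal_le_setIntegral_mul_setIntegral_inv (hs : MeasurableSet s)
    (hf : ∀ x ∈ s, 0 < f x) (hfi : IntegrableOn f s μ)
    (hfi' : IntegrableOn (fun x => (f x)⁻¹) s μ) :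
    μ.real s ^ 2 ≤ (∫ x in s, f x ∂μ) * ∫ x in s, (f x)⁻¹ ∂μ := by
  set A := ∫ x in s, f x ∂μ
  set B := ∫ x in s, (f x)⁻¹ ∂μ
  have hB : 0 ≤ B := setIntegral_nonneg hs fun x hx => (inv_pos.2 (hf x hx)).le
  rcases measureReal_nonneg.eq_or_lt with hm | hm
  · rw [← hm, sq, zero_mul]
    exact mul_nonneg (setIntegral_nonneg hs fun x hx => (hf x hx).le) hB
  obtain ⟨hμ0, hμ⟩ := ENNReal.toReal_pos_iff.1 hm
  have hA : 0 < A := setIntegral_pos_of_forall_pos hs hμ0.ne' hf hfi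
  -- integrate `2 ≤ y + y⁻¹` at `y = t f(x)`, with `t = μ(s) / ∫_s f`
  set t := μ.real s / A
  have key : ∫ _ in s, (2 : ℝ) ∂μ ≤ ∫ x in s, (t * f x + t⁻¹ * (f x)⁻¹) ∂μ :=
    setIntegral_mono_on (integrableOn_const hμ.ne) ((hfi.const_mul t).add
      (hfi'.const_mul t⁻¹)) hs fun x hx =>
        mul_inv t (f x) ▸ two_le_add_inv_self (mul_pos (div_pos hm hA) (hf x hx))
  rw [setIntegral_const, integral_add (hfi.const_mul t) (hfi'.const_mul t⁻¹), integral_const_mul,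
    integral_const_mul, smul_eq_mul, div_mul_cancel₀ _ hA.ne', inv_div, div_mul_eq_mul_div] at key
  have := (le_div_iff₀ hm).1 (by linarith : μ.real s ≤ A * B / μ.real s)
  nlinarith

end setIntegral

lemma len_pos (n : ℤ) : 0 < len n := zpow_pos two_pos _

lemma len_add_one (n : ℤ) : len (n + 1) = len n / 2 := by
  rw [len, len, neg_add, zpow_add₀ two_ne_zero, zpow_neg_one, div_eq_mul_inv]

lemma volume_dI (n k : ℤ) : volume (dI n k) = ENNReal.ofReal (len n) := by
  rw [dI, Real.volume_Ico, len]
  ring_nf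

lemma measurableSet_dI (n k : ℤ) : MeasurableSet (dI n k) := measurableSet_Ico

lemma mem_dI_iff {x : ℝ} {n k : ℤ} : x ∈ dI n k ↔ ⌊x * 2 ^ n⌋ = k := by
  have h : (0 : ℝ) < 2 ^ n := zpow_pos two_pos n
  rw [dI, mem_Ico, Int.floor_eq_iff, zpow_neg, ← div_eq_mul_inv, ← div_eq_mul_inv,
    div_le_iff₀ h, lt_div_iff₀ h]

lemma dI_nonempty (n k : ℤ) : (dI n k).Nonempty :=
  ⟨(k : ℝ) * 2 ^ (-n), mem_dI_iff.2 <| by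
    rw [zpow_neg, mul_assoc, inv_mul_cancel₀ (zpow_ne_zero _ two_ne_zero), mul_one,
      Int.floor_intCast]⟩

lemma floor_mul_two_zpow_add (x : ℝ) (n : ℤ) (j : ℕ) :
    ⌊x * 2 ^ n⌋ = ⌊x * 2 ^ (n + j)⌋ / 2 ^ j := by
  have h := Int.floor_div_natCast (x * 2 ^ (n + j)) (2 ^ j)
  push_cast at h
  rw [← h, zpow_add₀ two_ne_zero, zpow_natCast]
  field_simp

lemma dI_subset_of_mem {x : ℝ} {m l n j : ℤ} (hnm : n ≤ m) (hl : x ∈ dI m l) (hj : x ∈ dI n j) :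
    dI m l ⊆ dI n j := by
  obtain ⟨i, rfl⟩ := Int.le.dest hnm
  intro y hy
  rw [mem_dI_iff] at *
  rw [floor_mul_two_zpow_add y n i, hy, ← hl, ← floor_mul_two_zpow_add, hj]

lemma le_of_dI_subset {m l n k : ℤ} (h : dI m l ⊆ dI n k) : n ≤ m := by
  have h' := measure_mono (μ := volume) h
  rw [volume_dI, volume_dI, ENNReal.ofReal_le_ofReal_iff (len_pos n).le, len, len,
    zpow_le_zpow_iff_right₀ one_lt_two] at h'
  omega

lemma eq_of_dI_subset {n l k : ℤ} (h : dI n l ⊆ dI n k) : l = k := by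
  obtain ⟨x, hx⟩ := dI_nonempty n l
  exact (mem_dI_iff.1 hx).symm.trans (mem_dI_iff.1 (h hx))

lemma dI_union_halves (n k : ℤ) : dI (n + 1) (2 * k) ∪ dI (n + 1) (2 * k + 1) = dI n k := by
  ext x
  simp only [mem_union, mem_dI_iff, floor_mul_two_zpow_add x n 1, Nat.cast_one, pow_one]
  omega

lemma dI_subset_halves {m l n k : ℤ} (h : dI m l ⊆ dI n k) (hnm : n < m) :
    dI m l ⊆ dI (n + 1) (2 * k) ∨ dI m l ⊆ dI (n + 1) (2 * k + 1) := by
  obtain ⟨x, hx⟩ := dI_nonempty m l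
  rcases (dI_union_halves n k).symm ▸ h hx with hx' | hx'
  · exact .inl (dI_subset_of_mem hnm hx hx')
  · exact .inr (dI_subset_of_mem hnm hx hx')

lemma disjoint_dI_halves (n k : ℤ) : Disjoint (dI (n + 1) (2 * k)) (dI (n + 1) (2 * k + 1)) := by
  rw [Set.disjoint_left]
  intro x h1 h2
  rw [mem_dI_iff] at h1 h2
  omega

lemma eq_or_dI_subset_halves {m l n k : ℤ} (h : dI m l ⊆ dI n k) :
    (m, l) = (n, k) ∨ dI m l ⊆ dI (n + 1) (2 * k) ∨ dI m l ⊆ dI (n + 1) (2 * k + 1) := by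
  rcases (le_of_dI_subset h).eq_or_lt with rfl | hnm
  · exact .inl (by rw [eq_of_dI_subset h])
  · exact .inr (dI_subset_halves h hnm)

section avg

variable {w : ℝ → ℝ}

lemma integrableOn_dI (hw : LocallyIntegrable w volume) (n k : ℤ) : IntegrableOn w (dI n k) :=
  (hw.integrableOn_isCompact isCompact_Icc).mono_set Ico_subset_Icc_self

lemma avg_eq_inv_len_mul (n k : ℤ) : avg w n k = (len n)⁻¹ * ∫ x in dI n k, w x := by
  rw [avg, len, zpow_neg, inv_inv]

lemma avg_pos (hpos : ∀ x, 0 < w x) {n k : ℤ} (hw : IntegrableOn w (dI n k)) : 0 < avg w n k :=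
  mul_pos (zpow_pos two_pos n) <| setIntegral_pos_of_forall_pos (measurableSet_dI n k)
    (by simp [volume_dI, len_pos]) (fun x _ => hpos x) hw

lemma one_le_avg_mul_avg_inv (hpos : ∀ x, 0 < w x) {n k : ℤ} (hw : IntegrableOn w (dI n k))
    (hw' : IntegrableOn (inv' w) (dI n k)) : 1 ≤ avg w n k * avg (inv' w) n k := by
  have h := sq_measureReal_le_setIntegral_mul_setIntegral_inv (measurableSet_dI n k)
    (fun x _ => hpos x) hw hw'
  rw [measureReal_def, volume_dI, ENNReal.toReal_ofReal (len_pos n).le] at h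
  rw [avg_eq_inv_len_mul, avg_eq_inv_len_mul]
  calc (1 : ℝ) = (len n)⁻¹ ^ 2 * len n ^ 2 := by field_simp [(len_pos n).ne']
    _ ≤ (len n)⁻¹ ^ 2 * ((∫ x in dI n k, w x) * ∫ x in dI n k, inv' w x) := by gcongr; exact h
    _ = _ := by ring

def IsDyadicMartingale (u : ℤ → ℤ → ℝ) : Prop :=
  ∀ n k, u n k = (u (n + 1) (2 * k) + u (n + 1) (2 * k + 1)) / 2

lemma isDyadicMartingale_avg (hw : LocallyIntegrable w volume) : IsDyadicMartingale (avg w) := by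
  intro n k
  have h : ∫ x in dI n k, w x =
      (∫ x in dI (n + 1) (2 * k), w x) + ∫ x in dI (n + 1) (2 * k + 1), w x := by
    rw [← dI_union_halves]
    exact setIntegral_union (disjoint_dI_halves n k) (measurableSet_dI _ _) (integrableOn_dI hw _ _)
      (integrableOn_dI hw _ _)
  rw [avg, avg, avg, h, zpow_add_one₀ two_ne_zero]
  ring

def carlesonTerm (u v : ℤ → ℤ → ℝ) (n k : ℤ) : ℝ :=
  len n * ((u (n + 1) (2 * k) - u (n + 1) (2 * k + 1)) / 2) ^ 2 * v n k

lemma avg_sq_mul_cI_sq_mul_avg_inv {n k : ℤ} (hw : avg w n k ≠ 0) :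
    avg w n k ^ 2 * cI w n k ^ 2 * avg (inv' w) n k = carlesonTerm (avg w) (avg (inv' w)) n k := by
  rw [carlesonTerm, cI, avgL, avgR, div_pow, mul_pow, Real.sq_sqrt (len_pos n).le]
  field_simp

end avg

def bellman (Q x y : ℝ) : ℝ := x * (Q - x * y) + 2 * Q ^ 2 * (x - y⁻¹)

section bellman

variable {Q x y : ℝ}

lemma bellman_nonneg (hy : 0 < y) (h1 : 1 ≤ x * y) (hQ : x * y ≤ Q) : 0 ≤ bellman Q x y := by
  have hx : 0 < x := pos_of_mul_pos_left (one_pos.trans_le h1) hy.le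
  have hxy : 0 ≤ x - y⁻¹ := by rw [sub_nonneg, inv_le_iff_one_le_mul₀ hy]; linarith
  unfold bellman
  have := mul_nonneg hx.le (sub_nonneg.2 hQ)
  positivity

lemma bellman_le (hy : 0 < y) (h1 : 1 ≤ x * y) (hQ : x * y ≤ Q) :
    bellman Q x y ≤ (1 + 2 * Q ^ 2) * (Q - 1) * x := by
  have hx : 0 < x := pos_of_mul_pos_left (one_pos.trans_le h1) hy.le
  have hxy : x - y⁻¹ ≤ (Q - 1) * x := by
    have : x - y⁻¹ = (x * y - 1) / y := by field_simp
    rw [this, div_le_iff₀ hy]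
    nlinarith
  unfold bellman
  nlinarith [mul_le_mul_of_nonneg_left hxy (by positivity : (0 : ℝ) ≤ 2 * Q ^ 2)]

/-- With `a = (u₁ - u₂)/2`, `b = (v₁ - v₂)/2` and `(u, v)` the midpoint, the defect
`2B(u, v) - B(u₁, v₁) - B(u₂, v₂) - a²v` equals `a²v + 4uab + 4Q²b²/(v v₁ v₂)`, a quadratic form
in `(a, b)` that is nonnegative because `u² v₁ v₂ ≤ (uv)² ≤ Q²`. -/
lemma bellman_main_inequality {u₁ u₂ v₁ v₂ : ℝ} (hu₁ : 0 ≤ u₁) (hu₂ : 0 ≤ u₂) (hv₁ : 0 < v₁)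
    (hv₂ : 0 < v₂) (hQ : (u₁ + u₂) / 2 * ((v₁ + v₂) / 2) ≤ Q) :
    ((u₁ - u₂) / 2) ^ 2 * ((v₁ + v₂) / 2) + bellman Q u₁ v₁ + bellman Q u₂ v₂ ≤
      2 * bellman Q ((u₁ + u₂) / 2) ((v₁ + v₂) / 2) := by
  set u := (u₁ + u₂) / 2
  set v := (v₁ + v₂) / 2
  set a := (u₁ - u₂) / 2
  set b := (v₁ - v₂) / 2
  have hv : 0 < v := by positivity
  have huv : 0 ≤ u * v := by positivity
  have hdisc : u ^ 2 * (v₁ * v₂) ≤ Q ^ 2 := by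
    have : v₁ * v₂ ≤ v ^ 2 := by nlinarith [sq_nonneg b, show v ^ 2 = v₁ * v₂ + b ^ 2 by ring]
    nlinarith [mul_le_mul_of_nonneg_left this (sq_nonneg u), mul_self_le_mul_self huv hQ]
  have hdefect : 2 * bellman Q u v - bellman Q u₁ v₁ - bellman Q u₂ v₂ - a ^ 2 * v =
      (v₁ * v₂ * (a * v + 2 * u * b) ^ 2 + 4 * b ^ 2 * (Q ^ 2 - u ^ 2 * (v₁ * v₂))) /
        (v * v₁ * v₂) := by
    unfold bellman
    field_simp
    ring
  have : 0 ≤ (v₁ * v₂ * (a * v + 2 * u * b) ^ 2 + 4 * b ^ 2 * (Q ^ 2 - u ^ 2 * (v₁ * v₂))) /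
      (v * v₁ * v₂) := by
    have := sub_nonneg.2 hdisc
    positivity
  linarith

end bellman

structure IsDyadicA2Pair (Q : ℝ) (u v : ℤ → ℤ → ℝ) : Prop where
  pos_right : ∀ n k, 0 < v n k
  martingale_left : IsDyadicMartingale u
  martingale_right : IsDyadicMartingale v
  one_le_mul : ∀ n k, 1 ≤ u n k * v n k
  mul_le : ∀ n k, u n k * v n k ≤ Q

section carleson

variable {Q : ℝ} {u v : ℤ → ℤ → ℝ}

lemma carlesonTerm_nonneg {n k : ℤ} (hv : 0 ≤ v n k) : 0 ≤ carlesonTerm u v n k :=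
  mul_nonneg (mul_nonneg (len_pos n).le (sq_nonneg _)) hv

lemma IsDyadicA2Pair.bellman_nonneg (h : IsDyadicA2Pair Q u v) (n k : ℤ) :
    0 ≤ bellman Q (u n k) (v n k) :=
  _root_.bellman_nonneg (h.pos_right n k) (h.one_le_mul n k) (h.mul_le n k)

lemma IsDyadicA2Pair.carlesonTerm_add_le (h : IsDyadicA2Pair Q u v) (n k : ℤ) :
    carlesonTerm u v n k + 2 * len (n + 1) * bellman Q (u (n + 1) (2 * k)) (v (n + 1) (2 * k)) +
        2 * len (n + 1) * bellman Q (u (n + 1) (2 * k + 1)) (v (n + 1) (2 * k + 1)) ≤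
      2 * len n * bellman Q (u n k) (v n k) := by
  have hu : ∀ n k, 0 ≤ u n k := fun n k =>
    (pos_of_mul_pos_left (one_pos.trans_le (h.one_le_mul n k)) (h.pos_right n k).le).le
  have hconc := bellman_main_inequality (Q := Q) (hu (n + 1) (2 * k)) (hu (n + 1) (2 * k + 1))
    (h.pos_right (n + 1) (2 * k)) (h.pos_right (n + 1) (2 * k + 1))
    (h.martingale_left n k ▸ h.martingale_right n k ▸ h.mul_le n k)
  rw [← h.martingale_left n k, ← h.martingale_right n k] at hconc
  rw [carlesonTerm, len_add_one]
  nlinarith [len_pos n]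

lemma IsDyadicA2Pair.sum_carlesonTerm_le_of_depth_lt (h : IsDyadicA2Pair Q u v) (M : ℕ) (n k : ℤ)
    (s : Finset (ℤ × ℤ)) (hs : ∀ p ∈ s, dI p.1 p.2 ⊆ dI n k ∧ p.1 < n + M) :
    ∑ p ∈ s, carlesonTerm u v p.1 p.2 ≤ 2 * len n * bellman Q (u n k) (v n k) := by
  have hterm : ∀ p : ℤ × ℤ, 0 ≤ carlesonTerm u v p.1 p.2 := fun p =>
    carlesonTerm_nonneg (h.pos_right _ _).le
  induction M generalizing n k s with
  | zero =>
    have hs_empty : s = ∅ := Finset.eq_empty_of_forall_notMem fun p hp => by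
      have := le_of_dI_subset (hs p hp).1
      have := (hs p hp).2
      push_cast at this
      omega
    rw [hs_empty, Finset.sum_empty]
    exact mul_nonneg (mul_nonneg zero_le_two (len_pos n).le) (h.bellman_nonneg n k)
  | succ M ih =>
    classical
    set sL := s.filter fun p => dI p.1 p.2 ⊆ dI (n + 1) (2 * k)
    set sR := s.filter fun p => dI p.1 p.2 ⊆ dI (n + 1) (2 * k + 1)
    have hsplit : s ⊆ ({(n, k)} ∪ sL) ∪ sR := by
      rintro ⟨m, l⟩ hp
      rcases eq_or_dI_subset_halves (hs _ hp).1 with h | h | h <;> simp [sL, sR, hp, h]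
    have hdepth : ∀ j, ∀ p ∈ s.filter fun p => dI p.1 p.2 ⊆ dI (n + 1) j,
        dI p.1 p.2 ⊆ dI (n + 1) j ∧ p.1 < n + 1 + M := by
      intro j p hp
      rw [Finset.mem_filter] at hp
      have := (hs p hp.1).2
      push_cast at this
      exact ⟨hp.2, by omega⟩
    calc ∑ p ∈ s, carlesonTerm u v p.1 p.2
        ≤ ∑ p ∈ {(n, k)} ∪ sL, carlesonTerm u v p.1 p.2 + ∑ p ∈ sR, carlesonTerm u v p.1 p.2 :=
          Finset.sum_le_sum_add_sum_of_subset_union hterm hsplit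
      _ ≤ ∑ p ∈ {(n, k)}, carlesonTerm u v p.1 p.2 + ∑ p ∈ sL, carlesonTerm u v p.1 p.2 +
            ∑ p ∈ sR, carlesonTerm u v p.1 p.2 := by
          gcongr
          exact Finset.sum_le_sum_add_sum_of_subset_union hterm subset_rfl
      _ ≤ _ := by
          rw [Finset.sum_singleton]
          linarith [ih _ _ sL (hdepth _), ih _ _ sR (hdepth _), h.carlesonTerm_add_le n k]

lemma IsDyadicA2Pair.tsum_carlesonTerm_le (h : IsDyadicA2Pair Q u v) (n k : ℤ) :
    (len n)⁻¹ * ∑' I : {p : ℤ × ℤ // dI p.1 p.2 ⊆ dI n k}, carlesonTerm u v I.1.1 I.1.2 ≤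
      2 * bellman Q (u n k) (v n k) := by
  have htsum : ∑' I : {p : ℤ × ℤ // dI p.1 p.2 ⊆ dI n k}, carlesonTerm u v I.1.1 I.1.2 ≤
      2 * len n * bellman Q (u n k) (v n k) := by
    refine Real.tsum_le_of_sum_le (fun I => carlesonTerm_nonneg (h.pos_right _ _).le) fun t => ?_
    let depth : {p : ℤ × ℤ // dI p.1 p.2 ⊆ dI n k} → ℕ := fun I => (I.1.1 - n).toNat
    refine (Finset.sum_map t (Function.Embedding.subtype _) fun p => carlesonTerm u v p.1 p.2).symm
      |>.trans_le (h.sum_carlesonTerm_le_of_depth_lt (t.sup depth + 1) n k _ fun p hp => ?_)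
    obtain ⟨I, hI, rfl⟩ := Finset.mem_map.1 hp
    have : (I.1.1 - n).toNat ≤ t.sup depth := Finset.le_sup (f := depth) hI
    refine ⟨I.2, ?_⟩
    rw [Function.Embedding.subtype_apply]
    push_cast
    omega
  rw [inv_mul_le_iff₀ (len_pos n)]
  linarith

end carleson

/-- the key Carleson-type estimate of Lemma 2.2, for weights with
characteristic sufficiently close to 1, with `ε` and `C` independent of the weight. -/
theorem carleson_estimate_near_one :
    ∃ δ₀ > (0 : ℝ), ∃ ε > (0 : ℝ), ∃ C > (0 : ℝ), ∀ w : ℝ → ℝ,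
      (∀ x, 0 < w x) → LocallyIntegrable w volume → LocallyIntegrable (inv' w) volume →
      BddAbove (Set.range fun p : ℤ × ℤ => avg w p.1 p.2 * avg (inv' w) p.1 p.2) →
      A2d w ≤ 1 + δ₀ →
      ∀ n k : ℤ, (len n)⁻¹ * ∑' I : {p : ℤ × ℤ // dI p.1 p.2 ⊆ dI n k},
          (avg w I.1.1 I.1.2) ^ 2 * (cI w I.1.1 I.1.2) ^ 2 * avg (inv' w) I.1.1 I.1.2 ≤
        C * (Real.log (A2d w)) ^ ε * A2d w * avg w n k := by
  refine ⟨1, one_pos, 1, one_pos, 18, by norm_num, fun w hpos hw hw' hbdd hA2 n k => ?_⟩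
  set Q := A2d w
  have hu : ∀ n k, 0 < avg w n k := fun n k => avg_pos hpos (integrableOn_dI hw n k)
  have hv : ∀ n k, 0 < avg (inv' w) n k := fun n k =>
    avg_pos (fun x => inv_pos.2 (hpos x)) (integrableOn_dI hw' n k)
  have h1 : ∀ n k, 1 ≤ avg w n k * avg (inv' w) n k := fun n k =>
    one_le_avg_mul_avg_inv hpos (integrableOn_dI hw n k) (integrableOn_dI hw' n k)
  have hQ : ∀ n k, avg w n k * avg (inv' w) n k ≤ Q := fun n k => le_ciSup hbdd (n, k)
  have hpair : IsDyadicA2Pair Q (avg w) (avg (inv' w)) :=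
    ⟨hv, isDyadicMartingale_avg hw, isDyadicMartingale_avg hw', h1, hQ⟩
  have hQ1 : 1 ≤ Q := (h1 0 0).trans (hQ 0 0)
  have hQ0 : 0 < Q := one_pos.trans_le hQ1
  have hlog : Q - 1 ≤ Q * Real.log Q :=
    calc Q - 1 = Q * (1 - Q⁻¹) := by field_simp
      _ ≤ Q * Real.log Q := mul_le_mul_of_nonneg_left (Real.one_sub_inv_le_log_of_pos hQ0) hQ0.le
  calc _ = (len n)⁻¹ * ∑' I : {p : ℤ × ℤ // dI p.1 p.2 ⊆ dI n k},
        carlesonTerm (avg w) (avg (inv' w)) I.1.1 I.1.2 := by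
        simp_rw [avg_sq_mul_cI_sq_mul_avg_inv (hu _ _).ne']
    _ ≤ 2 * bellman Q (avg w n k) (avg (inv' w) n k) :=
        hpair.tsum_carlesonTerm_le n k
    _ ≤ 2 * ((1 + 2 * Q ^ 2) * (Q - 1) * avg w n k) := by
        gcongr
        exact bellman_le (hv n k) (h1 n k) (hQ n k)
    _ ≤ 18 * Real.log Q ^ (1 : ℝ) * Q * avg w n k := by
        rw [Real.rpow_one]
        have hQ2 : Q ^ 2 ≤ 4 := by nlinarith
        nlinarith [mul_le_mul_of_nonneg_right hlog (hu n k).le,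
          mul_le_mul_of_nonneg_right hQ2 (mul_nonneg (sub_nonneg.2 hQ1) (hu n k).le)]
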